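/- arXiv:1709.06787 — 2 statements merged into one kernel-verified Lean document; each statement's English description precedes it below -/
import Mathlib

section
/- For n ≥ 1 and equidistant nodes with interval length ℓ satisfying 0 < ℓ ≤ 2, the ∞-norm condition number of the monic Newton collocation matrix L equals 2^n·∑_{k=0}^n (1/k!)·(n/ℓ)^k, and in particular for ℓ = 2 it is at most (2√e)^n. -/
/-!
With `h = ℓ / n` the entries are `L i j = h ^ j * i! / (i - j)! = C(i, j) * (j! * h ^ j)`, so `L`
is the Pascal matrix times `diag (j! * h ^ j)`, and `L⁻¹` is `diag (1 / (i! * h ^ i))` times the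
signed Pascal matrix `((-1) ^ (i + j) * C(i, j))`. Both attain their largest absolute row sum in the
last row: `L` because `C(i, j)` grows with `i`, and `L⁻¹`, whose `i`-th row sums to
`(2 / h) ^ i / i!`, because this grows as long as `i ≤ 2 / h`, and `n ≤ 2 / h` is exactly
`ℓ ≤ 2`. Multiplying the two last-row sums and reversing the summation index gives the formula;
for `ℓ = 2` the partial sum of the exponential series is at most `exp (n / 2)`.
-/

open Finset Matrix Nat

noncomputable def rowSumNorm {m n : Type*} [Fintype n] (A : Matrix m n ℝ) : ℝ :=
  ⨆ i, ∑ j, |A i j|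

theorem Monotone.ciSup_eq_apply_top {ι α : Type*} [Preorder ι] [OrderTop ι]
    [ConditionallyCompleteLattice α] {f : ι → α} (hf : Monotone f) : ⨆ i, f i = f ⊤ :=
  IsGreatest.csSup_eq ⟨⟨⊤, rfl⟩, by rintro _ ⟨i, rfl⟩; exact hf le_top⟩

theorem pow_div_factorial_le_pow_div_factorial {c : ℝ} {i j : ℕ} (hij : i ≤ j)
    (hjc : j ≤ c) : c ^ i / i ! ≤ c ^ j / j ! := by
  induction j, hij using Nat.le_induction with
  | base => rfl
  | succ j hij ih =>
    have hj : (j + 1 : ℝ) ≤ c := by exact_mod_cast hjc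
    have hc : 0 ≤ c := by linarith
    calc c ^ i / i ! ≤ c ^ j / j ! := ih (by linarith)
      _ ≤ c ^ j / j ! * (c / (j + 1)) := le_mul_of_one_le_right (by positivity)
          ((one_le_div (by positivity)).2 hj)
      _ = c ^ (j + 1) / (j + 1)! := by push_cast [factorial_succ]; field_simp; ring

theorem sum_range_choose_mul_factorial_mul_pow {K : Type*} [Field K] [CharZero K] (n : ℕ)
    {h : K} (hh : h ≠ 0) :
    ∑ j ∈ range (n + 1), (n.choose j : K) * (j ! * h ^ j) =
      n ! * h ^ n * ∑ k ∈ range (n + 1), h⁻¹ ^ k / k ! := by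
  rw [← sum_range_reflect, mul_sum]
  refine sum_congr rfl fun k hk => ?_
  have hkn : k ≤ n := Nat.lt_succ_iff.1 (mem_range.1 hk)
  have hfact : (n.choose (n - k) : K) * (n - k)! * k ! = n ! := by
    rw [choose_symm hkn, ← cast_mul, ← cast_mul, mul_assoc, mul_comm (n - k)!,
      ← mul_assoc, choose_mul_factorial_mul_factorial hkn]
  have hk : (k ! : K) ≠ 0 := cast_ne_zero.2 (factorial_ne_zero k)
  rw [add_tsub_cancel_right, pow_sub₀ _ hh hkn, ← hfact, inv_pow]
  field_simp

section Pascal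

variable {R : Type*} [CommRing R]

theorem sum_range_choose_mul_eq_of_lt (f : ℕ → R) {i N : ℕ} (hi : i < N) :
    ∑ j ∈ range N, (i.choose j : R) * f j = ∑ j ∈ range (i + 1), (i.choose j : R) * f j :=
  (sum_subset (range_subset_range.2 hi) fun j _ hj => by
    rw [choose_eq_zero_of_lt (by simpa using hj), cast_zero, zero_mul]).symm

theorem sum_range_choose_mul_neg_one_pow_mul_choose (i m : ℕ) :
    ∑ j ∈ range (i + 1), (i.choose j : R) * ((-1) ^ (j + m) * j.choose m) =
      if i = m then 1 else 0 := by
  rcases lt_or_ge i m with him | hmi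
  · rw [if_neg him.ne]
    refine sum_eq_zero fun j hj => ?_
    rw [choose_eq_zero_of_lt (by simp at hj; omega : j < m)]
    simp
  obtain ⟨r, rfl⟩ := Nat.exists_eq_add_of_le hmi
  have hsign : ∀ t : ℕ, ((-1 : R) ^ (m + t + m)) = (-1) ^ t := fun t => by
    rw [show m + t + m = t + 2 * m by ring, pow_add, pow_mul]; simp
  have hlow : ∀ j ∈ range m, ((m + r).choose j : R) * ((-1) ^ (j + m) * j.choose m) = 0 :=
    fun j hj => by rw [choose_eq_zero_of_lt (mem_range.1 hj)]; simp
  rw [add_assoc, sum_range_add, sum_eq_zero hlow, zero_add]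
  calc _ = ∑ t ∈ range (r + 1), ((m + r).choose m : R) * ((-1) ^ t * r.choose t) := by
        refine sum_congr rfl fun t _ => ?_
        have := choose_mul (n := m + r) (le_add_right m t)
        rw [Nat.add_sub_cancel_left, Nat.add_sub_cancel_left] at this
        rw [hsign, mul_left_comm, ← cast_mul, this, cast_mul]
        ring
    _ = ((m + r).choose m : R) * ((∑ t ∈ range (r + 1), (-1) ^ t * r.choose t : ℤ) : R) := by
        push_cast; rw [mul_sum]
    _ = _ := by
        rw [Int.alternating_sum_range_choose]
        rcases eq_or_ne r 0 with rfl | hr <;> simp [*]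

variable (R) (n : ℕ)

def pascalMatrix : Matrix (Fin n) (Fin n) R := of fun i j => ((i : ℕ).choose j : R)

def signedPascalMatrix : Matrix (Fin n) (Fin n) R :=
  of fun i j => (-1) ^ ((i : ℕ) + j) * ((i : ℕ).choose j : R)

theorem pascalMatrix_mul_signedPascalMatrix :
    pascalMatrix R n * signedPascalMatrix R n = 1 := by
  ext i m
  simp only [pascalMatrix, signedPascalMatrix, mul_apply, of_apply, one_apply, ← Fin.val_inj]
  rw [Fin.sum_univ_eq_sum_range
    (fun j => ((i : ℕ).choose j : R) * ((-1) ^ (j + m) * j.choose m)) n,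
    sum_range_choose_mul_eq_of_lt _ i.isLt, sum_range_choose_mul_neg_one_pow_mul_choose]

end Pascal

def equispacedNewtonMatrix {R : Type*} [CommRing R] (a h : R) (n : ℕ) :
    Matrix (Fin n) (Fin n) R :=
  of fun i j => ∏ k ∈ range j, ((a + h * i) - (a + h * k))

theorem prod_range_sub_equispaced {R : Type*} [CommRing R] (a h : R) (i j : ℕ) :
    ∏ k ∈ range j, ((a + h * i) - (a + h * k)) = h ^ j * i.descFactorial j := by
  simp_rw [add_sub_add_left_eq_sub, ← mul_sub]
  rw [prod_mul_distrib, prod_const, card_range, ← descPochhammer_eval_eq_prod_range,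
    descPochhammer_eval_eq_descFactorial]

theorem equispacedNewtonMatrix_eq_pascalMatrix_mul_diagonal {R : Type*} [CommRing R]
    (a h : R) (n : ℕ) :
    equispacedNewtonMatrix a h n =
      pascalMatrix R n * diagonal fun j : Fin n => (j ! : R) * h ^ (j : ℕ) := by
  ext i j
  rw [mul_diagonal, equispacedNewtonMatrix, pascalMatrix, of_apply, of_apply,
    prod_range_sub_equispaced, descFactorial_eq_factorial_mul_choose, cast_mul]
  ring

theorem inv_equispacedNewtonMatrix {K : Type*} [Field K] [CharZero K] (a : K) {h : K}
    (hh : h ≠ 0) (n : ℕ) : (equispacedNewtonMatrix a h n)⁻¹ =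
      diagonal (fun i : Fin n => ((i ! : K) * h ^ (i : ℕ))⁻¹) * signedPascalMatrix K n := by
  refine inv_eq_right_inv ?_
  have hd : ∀ j : Fin n, (j ! : K) * h ^ (j : ℕ) * ((j ! : K) * h ^ (j : ℕ))⁻¹ = 1 :=
    fun j => mul_inv_cancel₀ (mul_ne_zero (cast_ne_zero.2 (factorial_ne_zero j))
      (pow_ne_zero _ hh))
  rw [equispacedNewtonMatrix_eq_pascalMatrix_mul_diagonal, Matrix.mul_assoc,
    ← Matrix.mul_assoc (diagonal _), diagonal_mul_diagonal, funext hd, diagonal_one,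
    Matrix.one_mul, pascalMatrix_mul_signedPascalMatrix]

section Newton

variable {h : ℝ} (a : ℝ) {n : ℕ}

theorem sum_abs_equispacedNewtonMatrix (hh : 0 ≤ h) (i : Fin n) :
    ∑ j, |equispacedNewtonMatrix a h n i j| =
      ∑ j : Fin n, ((i : ℕ).choose j : ℝ) * (j ! * h ^ (j : ℕ)) := by
  rw [equispacedNewtonMatrix_eq_pascalMatrix_mul_diagonal]
  refine sum_congr rfl fun j _ => ?_
  rw [mul_diagonal, pascalMatrix, of_apply, abs_of_nonneg (by positivity)]

theorem sum_abs_inv_equispacedNewtonMatrix (hh : 0 < h) (i : Fin n) :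
    ∑ j, |(equispacedNewtonMatrix a h n)⁻¹ i j| = (2 / h) ^ (i : ℕ) / (i : ℕ)! := by
  have habs : ∀ j : Fin n, |(equispacedNewtonMatrix a h n)⁻¹ i j| =
      ((i : ℕ).choose j : ℝ) * ((i : ℕ)! * h ^ (i : ℕ))⁻¹ := fun j => by
    rw [inv_equispacedNewtonMatrix a hh.ne', diagonal_mul, signedPascalMatrix, of_apply, abs_mul,
      abs_mul, abs_pow, abs_neg, abs_one, one_pow, one_mul, abs_of_pos (by positivity),
      Nat.abs_cast, mul_comm]
  simp_rw [habs]
  rw [Fin.sum_univ_eq_sum_range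
    (fun j => ((i : ℕ).choose j : ℝ) * ((i : ℕ)! * h ^ (i : ℕ))⁻¹) n,
    sum_range_choose_mul_eq_of_lt _ i.isLt, ← sum_mul, ← cast_sum, sum_range_choose, div_pow]
  push_cast
  field_simp

theorem rowSumNorm_equispacedNewtonMatrix (hh : 0 ≤ h) :
    rowSumNorm (equispacedNewtonMatrix a h (n + 1)) =
      ∑ j ∈ range (n + 1), (n.choose j : ℝ) * (j ! * h ^ j) := by
  have hmono : Monotone fun i : Fin (n + 1) => ∑ j, |equispacedNewtonMatrix a h (n + 1) i j| :=
    fun i i' hii' => by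
      simp only [sum_abs_equispacedNewtonMatrix a hh]
      exact sum_le_sum fun j _ => mul_le_mul_of_nonneg_right
        (cast_le.2 (choose_le_choose _ hii')) (by positivity)
  rw [rowSumNorm, hmono.ciSup_eq_apply_top, sum_abs_equispacedNewtonMatrix a hh, Fin.top_eq_last,
    Fin.val_last, Fin.sum_univ_eq_sum_range (fun j => (n.choose j : ℝ) * (j ! * h ^ j))]

theorem rowSumNorm_inv_equispacedNewtonMatrix (hh : 0 < h) (hnh : n * h ≤ 2) :
    rowSumNorm (equispacedNewtonMatrix a h (n + 1))⁻¹ = (2 / h) ^ n / n ! := by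
  have hn : (n : ℝ) ≤ 2 / h := (le_div_iff₀ hh).2 hnh
  have hmono : Monotone fun i : Fin (n + 1) =>
      ∑ j, |(equispacedNewtonMatrix a h (n + 1))⁻¹ i j| := fun i i' hii' => by
    simp only [sum_abs_inv_equispacedNewtonMatrix a hh]
    exact pow_div_factorial_le_pow_div_factorial hii'
      (le_trans (cast_le.2 (Nat.lt_succ_iff.1 i'.isLt)) hn)
  rw [rowSumNorm, hmono.ciSup_eq_apply_top, sum_abs_inv_equispacedNewtonMatrix a hh,
    Fin.top_eq_last, Fin.val_last]

theorem rowSumNorm_mul_rowSumNorm_inv_equispacedNewtonMatrix (hh : 0 < h) (hnh : n * h ≤ 2) :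
    rowSumNorm (equispacedNewtonMatrix a h (n + 1)) *
        rowSumNorm (equispacedNewtonMatrix a h (n + 1))⁻¹ =
      2 ^ n * ∑ k ∈ range (n + 1), h⁻¹ ^ k / k ! := by
  rw [rowSumNorm_equispacedNewtonMatrix a hh.le, rowSumNorm_inv_equispacedNewtonMatrix a hh hnh,
    sum_range_choose_mul_factorial_mul_pow n hh.ne', div_pow]
  field_simp

end Newton

/-- For interval length `0 < ℓ ≤ 2`, the `∞`-norm condition number of the monic Newton
collocation matrix is `2^n ∑_{k=0}^n (n/ℓ)^k / k!`; for `ℓ = 2` it is at most `(2√e)^n`. -/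
theorem kappa_inf_monic_newton (n : ℕ) (hn : 1 ≤ n) (a ℓ : ℝ) (hpos : 0 < ℓ) (hℓ : ℓ ≤ 2)
    (x : ℕ → ℝ) (hx : ∀ i, x i = a + ℓ * i / n)
    (L : Matrix (Fin (n + 1)) (Fin (n + 1)) ℝ)
    (hL : ∀ i j : Fin (n + 1), L i j = ∏ k ∈ Finset.range (j : ℕ), (x i - x k)) :
    (⨆ i : Fin (n + 1), ∑ j : Fin (n + 1), |L i j|) *
        (⨆ i : Fin (n + 1), ∑ j : Fin (n + 1), |L⁻¹ i j|)
      = 2 ^ n * ∑ k ∈ Finset.range (n + 1), (1 / (k.factorial : ℝ)) * (n / ℓ) ^ k ∧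
    (ℓ = 2 →
      (⨆ i : Fin (n + 1), ∑ j : Fin (n + 1), |L i j|) *
          (⨆ i : Fin (n + 1), ∑ j : Fin (n + 1), |L⁻¹ i j|)
        ≤ (2 * Real.sqrt (Real.exp 1)) ^ n) := by
  have hn0 : (0 : ℝ) < n := by exact_mod_cast hn
  have hL' : L = equispacedNewtonMatrix a (ℓ / n) (n + 1) := by
    ext i j
    rw [hL, equispacedNewtonMatrix, of_apply]
    exact prod_congr rfl fun k _ => by rw [hx, hx]; ring
  have hκ : rowSumNorm L * rowSumNorm L⁻¹ =
      2 ^ n * ∑ k ∈ range (n + 1), (1 / (k ! : ℝ)) * (n / ℓ) ^ k := by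
    rw [hL', rowSumNorm_mul_rowSumNorm_inv_equispacedNewtonMatrix a (div_pos hpos hn0)
      (by rwa [mul_div_cancel₀ _ hn0.ne']), inv_div]
    simp_rw [one_div_mul_eq_div]
  change rowSumNorm L * rowSumNorm L⁻¹ = _ ∧
    (ℓ = 2 → rowSumNorm L * rowSumNorm L⁻¹ ≤ _)
  refine ⟨hκ, fun hℓ2 => ?_⟩
  calc _ = 2 ^ n * ∑ k ∈ range (n + 1), (n / 2 : ℝ) ^ k / k ! := by
        rw [hκ, hℓ2]; simp_rw [one_div_mul_eq_div]
    _ ≤ 2 ^ n * Real.exp (n / 2) :=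
        mul_le_mul_of_nonneg_left (Real.sum_le_exp_of_nonneg (by positivity) _) (by positivity)
    _ = (2 * Real.sqrt (Real.exp 1)) ^ n := by
        rw [mul_pow, ← Real.exp_half, ← Real.exp_nat_mul, mul_div_assoc', mul_one]
end

section
/- If 1 < ℓ ≤ 2, then lim_{n→∞} (2^n·∑_{k=0}^n (1/k!)·(n/ℓ)^k)^{1/n} = 2·e^{1/ℓ}. -/
/-!
The sum is the degree-`n` Taylor polynomial of `exp` at `x = n / ℓ`. Beyond index `n` consecutive
Taylor terms shrink at least by the factor `x / (n + 1) ≤ 1 / ℓ < 1`, so the omitted tail is at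
most `1 / ℓ` times the whole series, and the partial sum lies between `(1 - 1 / ℓ) e^{n/ℓ}` and
`e^{n/ℓ}`. The constant `1 - 1 / ℓ > 0` disappears under the `n`-th root.
-/

open Real Filter Topology Nat

lemma pow_succ_div_factorial_le {x q : ℝ} {m : ℕ} (hx : 0 ≤ x) (hxq : x ≤ q * (m + 1)) :
    x ^ (m + 1) / (m + 1)! ≤ q * (x ^ m / m !) := by
  have hratio : x / (m + 1) ≤ q := (div_le_iff₀ (by positivity)).2 hxq
  calc x ^ (m + 1) / (m + 1)! = x / (m + 1) * (x ^ m / m !) := by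
        push_cast [Nat.factorial_succ]; field_simp; ring
    _ ≤ q * (x ^ m / m !) := by gcongr

lemma one_sub_mul_exp_le_sum_range {x q : ℝ} (n : ℕ) (hx : 0 ≤ x) (hxq : x ≤ q * (n + 1)) :
    (1 - q) * exp x ≤ ∑ k ∈ Finset.range (n + 1), x ^ k / k ! := by
  have hq : 0 ≤ q := by nlinarith
  have hsum : Summable (fun k : ℕ => x ^ k / k !) := summable_pow_div_factorial x
  have hexp : exp x = ∑' k : ℕ, x ^ k / k ! := by
    rw [exp_eq_exp_ℝ, NormedSpace.exp_eq_tsum_div]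
  have htail_le : ∑' j : ℕ, x ^ (j + n) / (j + n)! ≤ exp x := by
    rw [hexp, ← hsum.sum_add_tsum_nat_add n]
    exact le_add_of_nonneg_left (Finset.sum_nonneg fun k _ => by positivity)
  have htail_shift : ∑' j : ℕ, x ^ (j + (n + 1)) / (j + (n + 1))! ≤
      q * ∑' j : ℕ, x ^ (j + n) / (j + n)! := by
    rw [← tsum_mul_left]
    refine Summable.tsum_le_tsum (fun j => ?_) ((summable_nat_add_iff (n + 1)).2 hsum)
      (((summable_nat_add_iff n).2 hsum).mul_left q)
    rw [← add_assoc]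
    exact pow_succ_div_factorial_le hx (by push_cast; nlinarith)
  linarith [hsum.sum_add_tsum_nat_add (n + 1), mul_le_mul_of_nonneg_left htail_le hq]

lemma tendsto_rpow_one_div_of_le_of_le {u : ℕ → ℝ} {c C : ℝ} (hC : 0 < C) (hc : 0 ≤ c)
    (hlow : ∀ n, C * c ^ n ≤ u n) (hup : ∀ n, u n ≤ c ^ n) :
    Tendsto (fun n : ℕ => u n ^ ((1 : ℝ) / n)) atTop (𝓝 c) := by
  have hroot : ∀ n : ℕ, n ≠ 0 → (c ^ n) ^ ((1 : ℝ) / n) = c := fun n hn => by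
    rw [one_div, pow_rpow_inv_natCast hc hn]
  have hCroot : Tendsto (fun n : ℕ => C ^ ((1 : ℝ) / n) * c) atTop (𝓝 c) := by
    have := ((continuousAt_const_rpow hC.ne').tendsto.comp
      (tendsto_const_div_atTop_nhds_zero_nat 1)).mul_const c
    simpa only [Function.comp_def, rpow_zero, one_mul] using this
  refine tendsto_of_tendsto_of_tendsto_of_le_of_le' hCroot tendsto_const_nhds ?_ ?_
  · filter_upwards [eventually_ne_atTop 0] with n hn
    calc C ^ ((1 : ℝ) / n) * c = (C * c ^ n) ^ ((1 : ℝ) / n) := by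
          rw [mul_rpow hC.le (by positivity), hroot n hn]
      _ ≤ u n ^ ((1 : ℝ) / n) := rpow_le_rpow (by positivity) (hlow n) (by positivity)
  · filter_upwards [eventually_ne_atTop 0] with n hn
    calc u n ^ ((1 : ℝ) / n) ≤ (c ^ n) ^ ((1 : ℝ) / n) :=
          rpow_le_rpow (le_trans (by positivity) (hlow n)) (hup n) (by positivity)
      _ = c := hroot n hn

theorem kappa_root_tendsto_mid_length_general (ℓ : ℝ) (h1 : 1 < ℓ) :
    Tendsto
      (fun n : ℕ =>
        (2 ^ n * ∑ k ∈ Finset.range (n + 1), (1 / (k.factorial : ℝ)) * (n / ℓ) ^ k)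
          ^ ((1 : ℝ) / n))
      atTop (nhds (2 * Real.exp (1 / ℓ))) := by
  have hℓ : 0 < ℓ := by linarith
  have hpow : ∀ n : ℕ, (2 * exp (1 / ℓ)) ^ n = 2 ^ n * exp (n / ℓ) := fun n => by
    rw [mul_pow, ← exp_nat_mul, mul_one_div]
  simp only [one_div_mul_eq_div]
  refine tendsto_rpow_one_div_of_le_of_le (C := 1 - 1 / ℓ)
    (sub_pos.2 ((div_lt_one hℓ).2 h1)) (by positivity) (fun n => ?_) (fun n => ?_)
  · rw [hpow, mul_left_comm]
    refine mul_le_mul_of_nonneg_left (one_sub_mul_exp_le_sum_range n (by positivity) ?_)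
      (by positivity)
    rw [one_div_mul_eq_div]
    gcongr
    linarith
  · rw [hpow]
    exact mul_le_mul_of_nonneg_left (sum_le_exp_of_nonneg (by positivity) _) (by positivity)

theorem kappa_root_tendsto_mid_length (ℓ : ℝ) (h1 : 1 < ℓ) (h2 : ℓ ≤ 2) :
    Tendsto
      (fun n : ℕ =>
        (2 ^ n * ∑ k ∈ Finset.range (n + 1), (1 / (k.factorial : ℝ)) * (n / ℓ) ^ k)
          ^ ((1 : ℝ) / n))
      atTop (nhds (2 * Real.exp (1 / ℓ))) :=
  kappa_root_tendsto_mid_length_general ℓ h1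
end
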